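/- arXiv:0911.1689 — 2 statements merged into one kernel-verified Lean document; each statement's English description precedes it below -/
import Mathlib

section
/- Let Γ act on Π and on the Π-module A Γ-equivariantly. Given normalized maps ξ : Π³ → A, f̃ : Π² × Γ → A, t : Π × Γ² → A satisfying equations (17)–(20): (17) −(σx)·f̃(y,z,σ) + f̃(xy,z,σ) + f̃(x,y,σ) − f̃(x,yz,σ) = ξ(σx,σy,σz) − σ·ξ(x,y,z); (18) (στ)x·t(y,σ,τ) − t(xy,σ,τ) − t(x,σ,τ) = f̃(x,y,στ) − f̃(τx,τy,σ) − σ·f̃(x,y,τ); (19) x·ξ(y,z,t) − ξ(xy,z,t) + ξ(x,yz,t) − ξ(x,y,zt) + ξ(x,y,z) = 0; (20) t(x,στ,γ) + t(γx,σ,τ) = t(x,σ,τγ) + σ·t(x,τ,γ). Then the glued map h := ξ ∪ f̃ ∪ t on Π³ ∪ (Π²×Γ) ∪ (Π×Γ²) satisfies the four Γ-operator 3-cocycle conditions (8)–(11), so h ∈ Z³_Γ(Π,A). -/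
/-- Proposition 3.4: if the normalized maps ξ, f̃, t satisfy the component
equations (17)–(20) of an enough strict factor set, then the glued map h = ξ ∪ f̃ ∪ t
satisfies the four Γ-operator 3-cocycle conditions (8)–(11), i.e. h ∈ Z³_Γ(Π,A). -/
theorem stmt18 {G A Γ : Type*} [Group G] [Group Γ] [AddCommGroup A]
    [DistribMulAction G A] [MulDistribMulAction Γ G] [DistribMulAction Γ A]
    (hc : ∀ (σ : Γ) (x : G) (a : A), σ • (x • a) = (σ • x) • (σ • a))
    (ξ : G → G → G → A) (ft : G → G → Γ → A) (t : G → Γ → Γ → A)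
    -- normalization
    (nξ : ∀ x y z : G, x = 1 ∨ y = 1 ∨ z = 1 → ξ x y z = 0)
    (nft : ∀ (x y : G) (σ : Γ), x = 1 ∨ y = 1 ∨ σ = 1 → ft x y σ = 0)
    (nt : ∀ (x : G) (σ τ : Γ), x = 1 ∨ σ = 1 ∨ τ = 1 → t x σ τ = 0)
    -- (17)
    (h17 : ∀ (x y z : G) (σ : Γ),
      -((σ • x) • ft y z σ) + ft (x * y) z σ + ft x y σ - ft x (y * z) σ
        = ξ (σ • x) (σ • y) (σ • z) - σ • ξ x y z)
    -- (18)
    (h18 : ∀ (x y : G) (σ τ : Γ),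
      ((σ * τ) • x) • t y σ τ - t (x * y) σ τ - t x σ τ
        = ft x y (σ * τ) - ft (τ • x) (τ • y) σ - σ • ft x y τ)
    -- (19)
    (h19 : ∀ x y z w : G,
      x • ξ y z w - ξ (x * y) z w + ξ x (y * z) w - ξ x y (z * w) + ξ x y z = 0)
    -- (20)
    (h20 : ∀ (x : G) (σ τ γ : Γ),
      t x (σ * τ) γ + t (γ • x) σ τ = t x σ (τ * γ) + σ • t x τ γ) :
    -- h = ξ ∪ f̃ ∪ t satisfies (8)–(11):
    (∀ x y z w : G, ξ x y (z * w) + ξ (x * y) z w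
        = x • ξ y z w + ξ x (y * z) w + ξ x y z) ∧
    (∀ (x y z : G) (σ : Γ), σ • ξ x y z + ft (x * y) z σ + ft x y σ
        = ξ (σ • x) (σ • y) (σ • z) + (σ • x) • ft y z σ + ft x (y * z) σ) ∧
    (∀ (x y : G) (σ τ : Γ), σ • ft x y τ + ft (τ • x) (τ • y) σ + t x σ τ
        + ((σ * τ) • x) • t y σ τ = ft x y (σ * τ) + t (x * y) σ τ) ∧
    (∀ (x : G) (σ τ γ : Γ), σ • t x τ γ + t x σ (τ * γ)
        = t x (σ * τ) γ + t (γ • x) σ τ) := by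
  refine ⟨fun x y z w => ?_, fun x y z σ => ?_, fun x y σ τ => ?_, fun x σ τ γ => ?_⟩
  · rw [← sub_eq_zero,
      show ξ x y (z * w) + ξ (x * y) z w - (x • ξ y z w + ξ x (y * z) w + ξ x y z)
        = -(x • ξ y z w - ξ (x * y) z w + ξ x (y * z) w - ξ x y (z * w) + ξ x y z) from by abel,
      h19 x y z w, neg_zero]
  · rw [← sub_eq_zero,
      show σ • ξ x y z + ft (x * y) z σ + ft x y σ
          - (ξ (σ • x) (σ • y) (σ • z) + (σ • x) • ft y z σ + ft x (y * z) σ)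
        = (-((σ • x) • ft y z σ) + ft (x * y) z σ + ft x y σ - ft x (y * z) σ)
          - (ξ (σ • x) (σ • y) (σ • z) - σ • ξ x y z) from by abel,
      h17 x y z σ, sub_self]
  · have h2 : t x σ τ + t x σ τ = 0 := by
      have h1 := h18 x 1 σ τ
      rw [mul_one, nt 1 σ τ (Or.inl rfl), nft x 1 (σ * τ) (Or.inr (Or.inl rfl)),
        nft x 1 τ (Or.inr (Or.inl rfl)), smul_zero, smul_zero, smul_one,
        nft (τ • x) 1 σ (Or.inr (Or.inl rfl))] at h1
      simp only [sub_zero, zero_sub] at h1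
      have h3 : -(t x σ τ + t x σ τ) = 0 := by rw [← h1]; abel
      exact neg_eq_zero.mp h3
    have h := sub_eq_zero.mpr (h18 x y σ τ)
    rw [← sub_eq_zero,
      show σ • ft x y τ + ft (τ • x) (τ • y) σ + t x σ τ + ((σ * τ) • x) • t y σ τ
          - (ft x y (σ * τ) + t (x * y) σ τ)
        = (((σ * τ) • x) • t y σ τ - t (x * y) σ τ - t x σ τ
            - (ft x y (σ * τ) - ft (τ • x) (τ • y) σ - σ • ft x y τ))
          + (t x σ τ + t x σ τ) from by abel,
      h, h2, add_zero]
  · rw [← sub_eq_zero,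
      show σ • t x τ γ + t x σ (τ * γ) - (t x (σ * τ) γ + t (γ • x) σ τ)
        = -(t x (σ * τ) γ + t (γ • x) σ τ - (t x σ (τ * γ) + σ • t x τ γ)) from by abel,
      h20 x σ τ γ, sub_self, neg_zero]
end

section
/- Define the category Δ(θ,F): objects are elements of Π, and morphisms x → y of grade σ are pairs (u,σ) with u : F^σ(x) → y a morphism in the type-(Π,A) category (so F^σ(x) = y and u = (y,a) for some a ∈ A). With composition (u,σ)·(v,τ) = (u ∘ F^σ(v) ∘ (θ^{σ,τ}_x)⁻¹, στ), composition is associative and (id, 1) is a two-sided identity, provided (θ,F) satisfies the factor set axioms θ^{1,σ} = id = θ^{σ,1}, F¹ = id, and θ^{στ,γ}∘θ^{σ,τ}F^γ = θ^{σ,τγ}∘F^σθ^{τ,γ}. -/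
variable {G A Γ : Type*} [Group G] [Group Γ] [AddCommGroup A]

/-- A morphism x → y of grade σ in the crossed product category Δ(θ,F): it exists iff
F^σ(x) = φ^σ(x) = y, and is then determined by an element a ∈ A. -/
structure DelHom (A : Type*) {G Γ : Type*} [Group G] [Group Γ]
    (φ : Γ →* MulAut G) (x y : G) where
  a : A
  g : Γ
  eq : φ g x = y

/-- The identity morphism (id, 1) : x → x (uses F¹ = id, i.e. φ¹ = id). -/
def idm (φ : Γ →* MulAut G) (x : G) : DelHom A φ x x :=
  ⟨0, 1, by simp⟩

/-- Composition in Δ(θ,F): the composite of (u,σ) : x → y and (v,τ) : y → z is the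
morphism (v ∘ F^τ(u) ∘ (θ_x)⁻¹, τσ) : x → z, whose A-component is
v.a + f^τ(u.a) − t(x,τ,σ). -/
def comp (φ : Γ →* MulAut G) (f : Γ →* Multiplicative (AddAut A)) (t : G → Γ → Γ → A) {x y z : G}
    (u : DelHom A φ x y) (v : DelHom A φ y z) : DelHom A φ x z :=
  ⟨v.a + Multiplicative.toAdd (f v.g) u.a - t x v.g u.g, v.g * u.g, by
    rw [map_mul, MulAut.mul_apply, u.eq, v.eq]⟩

attribute [ext] DelHom

section

variable {φ : Γ →* MulAut G} {f : Γ →* Multiplicative (AddAut A)} {t : G → Γ → Γ → A}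
  {x y z w : G}

@[simp]
theorem comp_a (u : DelHom A φ x y) (v : DelHom A φ y z) :
    (comp φ f t u v).a = v.a + Multiplicative.toAdd (f v.g) u.a - t x v.g u.g := rfl

@[simp]
theorem comp_g (u : DelHom A φ x y) (v : DelHom A φ y z) :
    (comp φ f t u v).g = v.g * u.g := rfl

@[simp]
theorem idm_a : (idm (A := A) φ x).a = 0 := rfl

@[simp]
theorem idm_g : (idm (A := A) φ x).g = 1 := rfl

theorem comp_assoc
    (hcoc : ∀ (x : G) (σ τ γ : Γ),
      Multiplicative.toAdd (f σ) (t x τ γ) + t x σ (τ * γ) = t x (σ * τ) γ + t ((φ γ) x) σ τ)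
    (u : DelHom A φ x y) (v : DelHom A φ y z) (w' : DelHom A φ z w) :
    comp φ f t (comp φ f t u v) w' = comp φ f t u (comp φ f t v w') := by
  refine DelHom.ext ?_ (mul_assoc _ _ _).symm
  have cocycle := hcoc x w'.g v.g u.g
  -- the last cocycle term is based at `φ u.g x`, the target `y` of `u`
  rw [u.eq] at cocycle
  simp only [comp_a, comp_g, map_sub, map_add, map_mul, toAdd_mul, AddAut.add_apply]
  linear_combination (norm := abel) -cocycle

theorem idm_comp (ht : ∀ (x : G) (σ : Γ), t x σ 1 = 0) (u : DelHom A φ x y) :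
    comp φ f t (idm φ x) u = u :=
  DelHom.ext (by simp [ht]) (mul_one _)

theorem comp_idm (ht : ∀ (x : G) (σ : Γ), t x 1 σ = 0) (u : DelHom A φ x y) :
    comp φ f t u (idm φ y) = u :=
  DelHom.ext (by simp [ht]) (one_mul _)

end

/-- given a factor set (θ,F) on Γ with coefficients in the categorical group
of type (Π,A) — normalization θ^{1,σ} = id = θ^{σ,1}, F¹ = id, and the cocycle condition
for θ — composition in Δ(θ,F) is associative and (id,1) is a two-sided identity. -/
theorem stmt19 (φ : Γ →* MulAut G) (f : Γ →* Multiplicative (AddAut A)) (t : G → Γ → Γ → A)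
    -- θ^{1,σ} = id = θ^{σ,1}
    (ht1 : ∀ (x : G) (σ : Γ), t x 1 σ = 0)
    (ht2 : ∀ (x : G) (σ : Γ), t x σ 1 = 0)
    -- the cocycle condition (naturality of θ and condition iii) of a factor set)
    (hcoc : ∀ (x : G) (σ τ γ : Γ),
      Multiplicative.toAdd (f σ) (t x τ γ) + t x σ (τ * γ) = t x (σ * τ) γ + t ((φ γ) x) σ τ) :
    -- associativity
    (∀ (x y z w : G) (u : DelHom A φ x y) (v : DelHom A φ y z) (w' : DelHom A φ z w),
      comp φ f t (comp φ f t u v) w' = comp φ f t u (comp φ f t v w')) ∧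
    -- left and right identities
    (∀ (x y : G) (u : DelHom A φ x y), comp φ f t (idm φ x) u = u) ∧
    (∀ (x y : G) (u : DelHom A φ x y), comp φ f t u (idm φ y) = u) :=
  ⟨fun _ _ _ _ => comp_assoc hcoc, fun _ _ => idm_comp ht2, fun _ _ => comp_idm ht1⟩
end
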